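/- Let d, n ∈ ℕ+, let s = ⌈log₂(n + 1)⌉, and define f(1) = 1 and f(i) = i − 1 for 2 ≤ i ≤ n. Then there exist a precision s' and parameters W_Q, W_K, W_V, W_O of a single s'-precision causal self-attention head on embedding dimension d + 2s such that for all x₁, …, x_n ∈ 𝔽_{s'}^d, applying the head to the augmented sequence x'_i = (x_i, sbin_s(i), sbin_s(f(i))) produces at every position i ∈ {1, …, n} the output (x_{f(i)}, 0^{2s}); in particular, the first d coordinates of the attention outputs realize the shift map SHIFT(x₁, x₂, …, x_n) = (x₁, x₁, x₂, …, x_{n−1}). -/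

import Mathlib

noncomputable section

namespace LoopedTF

/-- The ReLU activation. -/
def relu (x : ℝ) : ℝ := max x 0

/-- `Fp s` : fixed-point numbers of precision `s`,
`{c·k·2^{-s} : c ∈ {-1,1}, k ∈ ℕ, 0 ≤ k ≤ 2^{2s}-1}`. -/
def Fp (s : ℕ) : Set ℝ :=
  {x | ∃ (c : ℝ) (k : ℕ), (c = 1 ∨ c = -1) ∧ k ≤ 2 ^ (2 * s) - 1 ∧
    x = c * (k : ℝ) * (2 : ℝ) ^ (-(s : ℤ))}

/-- Correct rounding of a nonnegative real to `Fp s` (nearest element, ties broken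
downwards, i.e. towards smaller absolute value, clamped at the largest element). -/
def rdPos (s : ℕ) (x : ℝ) : ℝ :=
  min ((2 : ℝ) ^ (2 * s) - 1) ((⌈x * (2 : ℝ) ^ s - 1 / 2⌉ : ℤ) : ℝ) * (2 : ℝ) ^ (-(s : ℤ))

/-- `rd s` : correct rounding to the nearest element of `Fp s`,
ties broken toward smaller absolute value. -/
def rd (s : ℕ) (x : ℝ) : ℝ := if 0 ≤ x then rdPos s x else -rdPos s (-x)

/-- Addition with rounding after the operation. -/
def rAdd (s : ℕ) (x y : ℝ) : ℝ := rd s (x + y)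

/-- Multiplication with rounding after the operation. -/
def rMul (s : ℕ) (x y : ℝ) : ℝ := rd s (x * y)

/-- Exponential with rounding after the operation. -/
def rExp (s : ℕ) (x : ℝ) : ℝ := rd s (Real.exp x)

/-- Division with rounding after the operation. -/
def rDiv (s : ℕ) (x y : ℝ) : ℝ := rd s (x / y)

/-- A finite sum computed with rounding after every binary addition. -/
def rSum (s : ℕ) {n : ℕ} (f : Fin n → ℝ) : ℝ := (List.ofFn f).foldl (rAdd s) 0

/-- Inner product computed in precision `s`. -/
def rDot (s : ℕ) {n : ℕ} (u v : Fin n → ℝ) : ℝ := rSum s fun i => rMul s (u i) (v i)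

/-- Matrix-vector product computed in precision `s`. -/
def rMulVec (s : ℕ) {m n : ℕ} (W : Matrix (Fin m) (Fin n) ℝ) (x : Fin n → ℝ) :
    Fin m → ℝ := fun i => rDot s (W i) x

/-- Softmax computed in precision `s`. -/
def rSoftmax (s : ℕ) {n : ℕ} (z : Fin n → ℝ) : Fin n → ℝ :=
  fun i => rDiv s (rExp s (z i)) (rSum s fun j => rExp s (z j))

/-- Parameters `W_Q, W_K, W_V, W_O ∈ ℝ^{d_ATTN × d}` of one attention head. -/
structure AttnParams (d dA : ℕ) where
  WQ : Matrix (Fin dA) (Fin d) ℝ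
  WK : Matrix (Fin dA) (Fin d) ℝ
  WV : Matrix (Fin dA) (Fin d) ℝ
  WO : Matrix (Fin dA) (Fin d) ℝ

/-- All parameters of the attention head lie in `Fp s`. -/
def AttnParams.inFp {d dA : ℕ} (s : ℕ) (p : AttnParams d dA) : Prop :=
  (∀ i j, p.WQ i j ∈ Fp s) ∧ (∀ i j, p.WK i j ∈ Fp s) ∧
  (∀ i j, p.WV i j ∈ Fp s) ∧ (∀ i j, p.WO i j ∈ Fp s)

/-- A causal self-attention head: position `i` outputs
`W_O^T Σ_{j ≤ i} (softmax(⟨W_Q x_i, W_K x_1⟩,…,⟨W_Q x_i, W_K x_i⟩))_j W_V x_j`,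
with every arithmetic operation rounded to precision `s`. -/
def attnHead (s : ℕ) {d dA : ℕ} (p : AttnParams d dA) {n : ℕ}
    (x : Fin n → Fin d → ℝ) : Fin n → Fin d → ℝ := fun i =>
  let prev : Fin (i.1 + 1) → Fin d → ℝ :=
    fun j => x ⟨j.1, lt_of_le_of_lt (Nat.lt_succ_iff.mp j.2) i.2⟩
  let q : Fin dA → ℝ := rMulVec s p.WQ (x i)
  let w : Fin (i.1 + 1) → ℝ := rSoftmax s fun j => rDot s q (rMulVec s p.WK (prev j))
  fun k => rDot s (fun l => p.WO l k)
    (fun l => rSum s fun j => rMul s (w j) (rMulVec s p.WV (prev j) l))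

/-- Multi-head attention: the sum of the outputs of the `H` heads. -/
def mha (s : ℕ) {H d dA n : ℕ} (p : Fin H → AttnParams d dA)
    (x : Fin n → Fin d → ℝ) : Fin n → Fin d → ℝ :=
  fun i k => rSum s fun h => attnHead s (p h) x i k

/-- Parameters of a position-wise feed-forward layer `x ↦ W₂ relu(W₁x+b₁)+b₂`. -/
structure FFParams (d dFF : ℕ) where
  W1 : Matrix (Fin dFF) (Fin d) ℝ
  b1 : Fin dFF → ℝ
  W2 : Matrix (Fin d) (Fin dFF) ℝ
  b2 : Fin d → ℝ

/-- All parameters of the feed-forward layer lie in `Fp s`. -/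
def FFParams.inFp {d dFF : ℕ} (s : ℕ) (p : FFParams d dFF) : Prop :=
  (∀ i j, p.W1 i j ∈ Fp s) ∧ (∀ i, p.b1 i ∈ Fp s) ∧
  (∀ i j, p.W2 i j ∈ Fp s) ∧ (∀ i, p.b2 i ∈ Fp s)

/-- The feed-forward layer `x ↦ W₂ relu(W₁x+b₁)+b₂` in precision `s`. -/
def ffApply (s : ℕ) {d dFF : ℕ} (p : FFParams d dFF) (x : Fin d → ℝ) : Fin d → ℝ :=
  fun k => rAdd s
    (rDot s (p.W2 k) (fun j => relu (rAdd s (rDot s (p.W1 j) x) (p.b1 j)))) (p.b2 k)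

/-- Parameters of one transformer layer: `H` attention heads and one FF layer. -/
structure LayerParams (d dFF dA H : ℕ) where
  attn : Fin H → AttnParams d dA
  ff : FFParams d dFF

/-- All parameters of the layer lie in `Fp s`. -/
def LayerParams.inFp {d dFF dA H : ℕ} (s : ℕ) (p : LayerParams d dFF dA H) : Prop :=
  (∀ h, (p.attn h).inFp s) ∧ p.ff.inFp s

/-- The half layer `id + MHA`. -/
def layerHalf (s : ℕ) {d dFF dA H n : ℕ} (p : LayerParams d dFF dA H)
    (x : Fin n → Fin d → ℝ) : Fin n → Fin d → ℝ :=
  fun i k => rAdd s (x i k) (mha s p.attn x i k)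

/-- One transformer layer `(id + FF) ∘ (id + MHA)`. -/
def layerApply (s : ℕ) {d dFF dA H n : ℕ} (p : LayerParams d dFF dA H)
    (x : Fin n → Fin d → ℝ) : Fin n → Fin d → ℝ :=
  let y := layerHalf s p x
  fun i k => rAdd s (y i k) (ffApply s p.ff (y i) k)

/-- An `L`-layer transformer block
`(id+FF^{(L-1)}) ∘ (id+MHA^{(L-1)}) ∘ ⋯ ∘ (id+FF^{(0)}) ∘ (id+MHA^{(0)})`. -/
def blockApply (s : ℕ) {L d dFF dA H n : ℕ} (p : Fin L → LayerParams d dFF dA H)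
    (x : Fin n → Fin d → ℝ) : Fin n → Fin d → ℝ :=
  (List.ofFn p).foldl (fun acc q => layerApply s q acc) x

/-- The first `t` layers of a transformer block (intermediate embeddings). -/
def blockPrefix (s : ℕ) {L d dFF dA H n : ℕ} (p : Fin L → LayerParams d dFF dA H)
    (t : ℕ) (x : Fin n → Fin d → ℝ) : Fin n → Fin d → ℝ :=
  ((List.ofFn p).take t).foldl (fun acc q => layerApply s q acc) x

/-- A (looped) transformer model: token embedding, position embedding,
an `L`-layer transformer block, and the output (unembedding) matrix. -/
structure TModel (V : Type*) (L d dFF dA H : ℕ) where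
  te : V → Fin d → ℝ
  pe : ℕ → Fin d → ℝ
  layers : Fin L → LayerParams d dFF dA H
  out : V → Fin d → ℝ

/-- The model is of precision `s`: all its parameters lie in `Fp s`. -/
def TModel.inFp {V : Type*} {L d dFF dA H : ℕ} (s : ℕ) (M : TModel V L d dFF dA H) : Prop :=
  (∀ v k, M.te v k ∈ Fp s) ∧ (∀ i k, M.pe i k ∈ Fp s) ∧
  (∀ v k, M.out v k ∈ Fp s) ∧ (∀ l, (M.layers l).inFp s)

/-- The embedding layer `(v₁,…,v_n) ↦ (θ_TE(v_i)+θ_PE(i))_i`. -/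
def TModel.embed {V : Type*} {L d dFF dA H : ℕ} (M : TModel V L d dFF dA H)
    (s : ℕ) {n : ℕ} (v : Fin n → V) : Fin n → Fin d → ℝ :=
  fun i k => rAdd s (M.te (v i) k) (M.pe i.1 k)

/-- The output distribution `p_{θ,T} = OUTPUT ∘ (TB_θ)^T ∘ EMBED` of the transformer
whose block is looped `T` times (softmax of the logits at the last position). -/
def TModel.probs {V : Type*} [Fintype V] {L d dFF dA H : ℕ} (M : TModel V L d dFF dA H)
    (s : ℕ) (T : ℕ) {n : ℕ} (v : Fin n → V) : V → ℝ :=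
  if h : 0 < n then
    let xT := (fun x => blockApply s M.layers x)^[T] (M.embed s v)
    let xl : Fin d → ℝ := xT ⟨n - 1, by omega⟩
    fun w => rDiv s (rExp s (rDot s xl (M.out w))) (rd s (∑ u : V, rExp s (rDot s xl (M.out u))))
  else fun _ => 0

/-- An argmax of `f` over a (nonempty) finite type. -/
def greedy {V : Type*} [Fintype V] [Nonempty V] (f : V → ℝ) : V :=
  Classical.choose (Finset.exists_max_image Finset.univ f
    ⟨Classical.arbitrary V, Finset.mem_univ _⟩)

/-- Greedy decoding `TF_{θ,T}(v₁,…,v_n) = argmax_{v∈V} p_{θ,T}(v | v₁,…,v_n)`. -/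
def TModel.decode {V : Type*} [Fintype V] [Nonempty V] {L d dFF dA H : ℕ}
    (M : TModel V L d dFF dA H) (s : ℕ) (T : ℕ) {n : ℕ} (v : Fin n → V) : V :=
  greedy (M.probs s T v)

end LoopedTF


namespace LoopedTF

/-- Signed binary encoding `sbin_s(i) ∈ {−1,1}^s` of `i` (`1` where bit of `i` is `1`). -/
def sbin (s i : ℕ) : Fin s → ℝ := fun k => if i.testBit (k : ℕ) then 1 else -1

/-- The index map of the shift: `f(1) = 1` and `f(i) = i − 1` for `i ≥ 2`. -/
def fShift (i : ℕ) : ℕ := if i = 1 then 1 else i - 1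

/-- The augmented sequence `x'_i = (x_i, sbin_s(i), sbin_s(f(i)))` (positions 1-indexed). -/
def augment {d n : ℕ} (s : ℕ) (x : Fin n → Fin d → ℝ) :
    Fin n → Fin (d + 2 * s) → ℝ := fun i k =>
  Fin.append (x i) (Fin.append (sbin s ((i : ℕ) + 1)) (sbin s (fShift ((i : ℕ) + 1))))
    (Fin.cast (by ring) k)

/-!
The head attends from position `i` to position `f(i)` only. The query of `x'_i` is
`4c · sbin_s(f(i))` followed by `s` copies of `2c`, the key of `x'_j` is `sbin_s(j)` followed by
`s` copies of `-2`, so the attention score is `4c (⟨sbin_s(f(i)), sbin_s(j)⟩ - s)`: it is `0` for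
`j = f(i)` and at most `-8c` otherwise, since distinct encodings differ in some bit. For `c = s'`
the rounded exponentials of all other scores are `0`, the rounded softmax is exactly the indicator
of `f(i)`, and the value and output matrices, both the projection onto the data block, copy
`x_{f(i)}`.

The input has no constant coordinate. The constants `2c` and `-2` are read off the positional
encodings through `2 (I - f(I)) + b(I) + b(f(I)) = 2`, where `b(I) = ±1` is the signed parity bit
of `I`: for `I ≥ 2` the parities of `I` and `f(I) = I - 1` differ, and `f(1) = 1`.

Queries, keys and scores are computed from integers of absolute value at most `4c · 2^s`, at most
`d + 2s` at a time, and the values only multiply entries of `x` by `0` or `1`; so once `s'` is large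
enough, rounding is exact at every step of the forward pass except the exponentials.
-/

section Blocks

variable {α β γ : Type*} {d s : ℕ}

def blockVec (u : Fin d → α) (v w : Fin s → α) : Fin (d + 2 * s) → α :=
  fun k => Fin.append u (Fin.append v w) (Fin.cast (by ring) k)

theorem augment_eq_blockVec {n : ℕ} (x : Fin n → Fin d → ℝ) (i : Fin n) :
    augment s x i = blockVec (x i) (sbin s (i + 1)) (sbin s (fShift (i + 1))) :=
  rfl

theorem blockVec_map₂ (f : α → β → γ) (u : Fin d → α) (v w : Fin s → α) (u' : Fin d → β)
    (v' w' : Fin s → β) :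
    (fun k => f (blockVec u v w k) (blockVec u' v' w' k)) =
      blockVec (fun i => f (u i) (u' i)) (fun t => f (v t) (v' t))
        (fun t => f (w t) (w' t)) := by
  funext k
  simp only [blockVec]
  generalize Fin.cast _ k = j
  induction j using Fin.addCases with
  | left i => simp only [Fin.append_left]
  | right j =>
    induction j using Fin.addCases with
    | left t => simp only [Fin.append_left, Fin.append_right]
    | right t => simp only [Fin.append_right]

theorem comp_blockVec (f : α → β) (u : Fin d → α) (v w : Fin s → α) :
    f ∘ blockVec u v w = blockVec (f ∘ u) (f ∘ v) (f ∘ w) :=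
  blockVec_map₂ (fun a (_ : Unit) => f a) u v w 0 0 0

theorem forall_blockVec {P : α → Prop} {u : Fin d → α} {v w : Fin s → α} :
    (∀ k, P (blockVec u v w k)) ↔ (∀ i, P (u i)) ∧ (∀ t, P (v t)) ∧ ∀ t, P (w t) := by
  have h : d + 2 * s = d + (s + s) := by ring
  have H : (∀ k, P (blockVec u v w k)) ↔ ∀ j, P (Fin.append u (Fin.append v w) j) :=
    ⟨fun H j => by simpa [blockVec] using H (j.cast h.symm), fun H k => H _⟩
  rw [H, Fin.forall_fin_add, Fin.forall_fin_add]
  simp only [Fin.append_left, Fin.append_right]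

theorem sum_blockVec [AddCommMonoid α] (u : Fin d → α) (v w : Fin s → α) :
    ∑ k, blockVec u v w k = ∑ i, u i + ∑ t, v t + ∑ t, w t := by
  rw [Fintype.sum_equiv (finCongr (by ring : d + 2 * s = d + (s + s))) (blockVec u v w)
    (Fin.append u (Fin.append v w)) (fun _ => rfl)]
  simp only [Fin.sum_univ_add, Fin.append_left, Fin.append_right, add_assoc]

theorem dotProduct_blockVec [Mul α] [AddCommMonoid α] (u u' : Fin d → α)
    (v w v' w' : Fin s → α) :
    blockVec u v w ⬝ᵥ blockVec u' v' w' = u ⬝ᵥ u' + v ⬝ᵥ v' + w ⬝ᵥ w' := by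
  simp only [dotProduct]
  rw [← sum_blockVec, ← blockVec_map₂]

theorem blockVec_zero_zero_apply [Zero α] (u : Fin d → α) (k : Fin (d + 2 * s)) :
    blockVec u 0 0 k = if h : (k : ℕ) < d then u ⟨k, h⟩ else 0 := by
  simp only [blockVec]
  generalize hj : Fin.cast _ k = j
  have hk : (k : ℕ) = j := by rw [← hj]; rfl
  induction j using Fin.addCases with
  | left i => simp [hk]
  | right j =>
    rw [dif_neg (by simp [hk]), Fin.append_right]
    induction j using Fin.addCases <;>
      simp only [Fin.append_left, Fin.append_right, Pi.zero_apply]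

end Blocks

section Rounding

variable {s : ℕ}

theorem mem_Fp_iff {x : ℝ} :
    x ∈ Fp s ↔ x * 2 ^ s ∈ (⊥ : Subring ℝ) ∧ |x| * 2 ^ s ≤ 2 ^ (2 * s) - 1 := by
  have hpos : (0 : ℝ) < 2 ^ s := by positivity
  have hN : ((2 ^ (2 * s) - 1 : ℕ) : ℝ) = 2 ^ (2 * s) - 1 := by
    rw [Nat.cast_sub Nat.one_le_two_pow]; push_cast; ring
  constructor
  · rintro ⟨c, k, hc, hk, rfl⟩
    have hk' : (k : ℝ) ≤ 2 ^ (2 * s) - 1 := by rw [← hN]; exact_mod_cast hk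
    have hx : c * k * (2 : ℝ) ^ (-(s : ℤ)) * 2 ^ s = c * k := by
      rw [zpow_neg, zpow_natCast]; field_simp
    rw [hx, abs_mul, abs_mul, Nat.abs_cast]
    rcases hc with rfl | rfl
    · exact ⟨Subring.mem_bot.2 ⟨k, by simp⟩, by simpa using hk'⟩
    · exact ⟨Subring.mem_bot.2 ⟨-k, by simp⟩, by simpa using hk'⟩
  · rintro ⟨hgrid, hb⟩
    obtain ⟨m, hm⟩ := Subring.mem_bot.1 hgrid
    have hmb : (m.natAbs : ℝ) ≤ 2 ^ (2 * s) - 1 := by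
      rw [Nat.cast_natAbs, Int.cast_abs, hm, abs_mul, abs_of_pos hpos]; exact hb
    refine ⟨if 0 ≤ m then 1 else -1, m.natAbs, by split_ifs <;> simp, ?_, ?_⟩
    · rw [← hN] at hmb; exact_mod_cast hmb
    · rw [zpow_neg, zpow_natCast, eq_mul_inv_iff_mul_eq₀ hpos.ne', ← hm]
      split_ifs with h
      · rw [one_mul, Nat.cast_natAbs, Int.cast_abs, abs_of_nonneg (by exact_mod_cast h)]
      · rw [Nat.cast_natAbs, Int.cast_abs, abs_of_neg (by exact_mod_cast not_le.1 h)]; ring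

theorem zero_mem_Fp : (0 : ℝ) ∈ Fp s :=
  mem_Fp_iff.2 ⟨by simp [zero_mem], by simpa using one_le_pow₀ one_le_two⟩

theorem neg_mem_Fp {x : ℝ} (hx : x ∈ Fp s) : -x ∈ Fp s := by
  rw [mem_Fp_iff] at hx ⊢
  rw [neg_mul, abs_neg]
  exact ⟨neg_mem hx.1, hx.2⟩

theorem mem_Fp_of_int {x : ℝ} (hx : x ∈ (⊥ : Subring ℝ)) (hb : |x| ≤ 2 ^ s - 1) :
    x ∈ Fp s := by
  have hpos : (0 : ℝ) < 2 ^ s := by positivity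
  refine mem_Fp_iff.2 ⟨mul_mem hx (pow_mem (natCast_mem _ 2) s), ?_⟩
  calc |x| * 2 ^ s ≤ (2 ^ s - 1) * 2 ^ s := by gcongr
    _ ≤ 2 ^ (2 * s) - 1 := by
      rw [two_mul, pow_add]; nlinarith [one_le_pow₀ (M₀ := ℝ) (n := s) one_le_two]

theorem one_mem_Fp (hs : 1 ≤ s) : (1 : ℝ) ∈ Fp s := by
  refine mem_Fp_of_int (one_mem _) ?_
  have : (2 : ℝ) ≤ 2 ^ s := by simpa using pow_le_pow_right₀ one_le_two hs
  rw [abs_one]; linarith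

theorem single_mem_Fp {N : ℕ} (j : Fin N) {y : ℝ} (hy : y ∈ Fp s) (k : Fin N) :
    (Pi.single j y : Fin N → ℝ) k ∈ Fp s := by
  by_cases hk : k = j
  · subst hk; simpa using hy
  · simpa [hk] using zero_mem_Fp

theorem rdPos_eq_self {x : ℝ} (h0 : 0 ≤ x) (hx : x ∈ Fp s) : rdPos s x = x := by
  obtain ⟨hgrid, hb⟩ := mem_Fp_iff.1 hx
  obtain ⟨m, hm⟩ := Subring.mem_bot.1 hgrid
  have hceil : ⌈x * 2 ^ s - 1 / 2⌉ = m := by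
    rw [Int.ceil_eq_iff, ← hm]; constructor <;> linarith
  have hmax : (m : ℝ) ≤ 2 ^ (2 * s) - 1 := by rw [hm, ← abs_of_nonneg h0]; exact hb
  rw [rdPos, hceil, min_eq_right hmax, hm, zpow_neg, zpow_natCast]
  field_simp

theorem rd_eq_self {x : ℝ} (hx : x ∈ Fp s) : rd s x = x := by
  unfold rd
  split_ifs with h
  · exact rdPos_eq_self h hx
  · rw [rdPos_eq_self (by linarith) (neg_mem_Fp hx), neg_neg]

theorem rd_zero : rd s 0 = 0 := rd_eq_self zero_mem_Fp

theorem rd_mem_Fp (x : ℝ) : rd s x ∈ Fp s := by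
  have hpos : (0 : ℝ) < 2 ^ s := by positivity
  have hpos' : (0 : ℤ) ≤ 2 ^ (2 * s) - 1 := by
    have := pow_pos (two_pos (α := ℤ)) (2 * s); omega
  have key : ∀ y : ℝ, 0 ≤ y → rdPos s y ∈ Fp s := fun y hy => by
    set m : ℤ := min (2 ^ (2 * s) - 1) ⌈y * 2 ^ s - 1 / 2⌉
    have hm0 : 0 ≤ m := le_min hpos' (Int.ceil_nonneg_of_neg_one_lt (by nlinarith))
    have hval : rdPos s y * 2 ^ s = m := by
      rw [rdPos, zpow_neg, zpow_natCast]; push_cast [m]; field_simp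
    refine mem_Fp_iff.2 ⟨Subring.mem_bot.2 ⟨m, hval.symm⟩, ?_⟩
    rw [← abs_of_pos hpos, ← abs_mul, hval, ← Int.cast_abs, abs_of_nonneg hm0]
    exact_mod_cast min_le_left _ _
  unfold rd
  split_ifs with h
  · exact key x h
  · exact neg_mem_Fp (key _ (by linarith))

theorem rd_eq_zero {x : ℝ} (h0 : 0 ≤ x) (h : x * 2 ^ s ≤ 1 / 2) : rd s x = 0 := by
  have hceil : ⌈x * 2 ^ s - 1 / 2⌉ = 0 := by
    rw [Int.ceil_eq_iff]; constructor <;> push_cast <;> nlinarith [pow_pos (two_pos (α := ℝ)) s]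
  rw [rd, if_pos h0, rdPos, hceil, Int.cast_zero, min_eq_right, zero_mul]
  linarith [one_le_pow₀ (M₀ := ℝ) (n := 2 * s) one_le_two]

end Rounding

section ExactSums

variable {s N : ℕ}

theorem foldl_rAdd_eq_add_sum : ∀ (L : List ℝ) (a : ℝ),
    (∀ y ∈ a :: L, y * 2 ^ s ∈ (⊥ : Subring ℝ)) →
    (|a| + (L.map abs).sum) * 2 ^ s ≤ 2 ^ (2 * s) - 1 → L.foldl (rAdd s) a = a + L.sum
  | [], a, _, _ => by simp
  | y :: L, a, hg, hb => by
    simp only [List.map_cons, List.sum_cons] at hb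
    have hL : 0 ≤ (L.map abs).sum := List.sum_nonneg (by simp)
    have hgrid : (a + y) * 2 ^ s ∈ (⊥ : Subring ℝ) := by
      rw [add_mul]; exact add_mem (hg a (by simp)) (hg y (by simp))
    have hb' : (|a + y| + (L.map abs).sum) * 2 ^ s ≤ 2 ^ (2 * s) - 1 :=
      le_trans (mul_le_mul_of_nonneg_right (by linarith [abs_add_le a y]) (by positivity)) hb
    have hstep : rAdd s a y = a + y :=
      rd_eq_self (mem_Fp_iff.2 ⟨hgrid, le_trans
        (mul_le_mul_of_nonneg_right (by linarith) (by positivity)) hb'⟩)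
    rw [List.foldl_cons, hstep, foldl_rAdd_eq_add_sum L (a + y) _ hb', List.sum_cons, add_assoc]
    intro z hz
    rcases List.mem_cons.1 hz with rfl | hz
    · exact hgrid
    · exact hg z (by simp [hz])

theorem rSum_eq_sum {g : Fin N → ℝ} (hg : ∀ i, g i * 2 ^ s ∈ (⊥ : Subring ℝ))
    (hb : (∑ i, |g i|) * 2 ^ s ≤ 2 ^ (2 * s) - 1) : rSum s g = ∑ i, g i := by
  rw [rSum, foldl_rAdd_eq_add_sum, zero_add, List.sum_ofFn]
  · intro y hy
    rcases List.mem_cons.1 hy with rfl | hy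
    · simp [zero_mem]
    · obtain ⟨i, rfl⟩ := List.mem_ofFn.1 hy
      exact hg i
  · simpa [List.map_ofFn, List.sum_ofFn] using hb

theorem rSum_mem_Fp (g : Fin N → ℝ) : rSum s g ∈ Fp s := by
  suffices ∀ (L : List ℝ) (a : ℝ), a ∈ Fp s → L.foldl (rAdd s) a ∈ Fp s from
    this _ _ zero_mem_Fp
  intro L
  induction L with
  | nil => exact fun _ ha => ha
  | cons y L ih => exact fun a _ => ih _ (rd_mem_Fp _)

theorem rSum_pi_single (j : Fin N) {y : ℝ} (hy : y ∈ Fp s) :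
    rSum s (Pi.single j y) = y := by
  obtain ⟨hgrid, hb⟩ := mem_Fp_iff.1 hy
  rw [rSum_eq_sum, Finset.sum_pi_single', if_pos (Finset.mem_univ _)]
  · intro i
    by_cases h : i = j
    · subst h; simpa using hgrid
    · simp [h, zero_mem]
  · rwa [Finset.sum_eq_single j (fun i _ hi => by simp [hi]) (by simp), Pi.single_eq_same]

theorem rDot_eq_dotProduct {u v : Fin N → ℝ}
    (hg : ∀ i, u i * v i * 2 ^ s ∈ (⊥ : Subring ℝ))
    (hb : (∑ i, |u i * v i|) * 2 ^ s ≤ 2 ^ (2 * s) - 1) : rDot s u v = u ⬝ᵥ v := by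
  have hmul : ∀ i, rMul s (u i) (v i) = u i * v i := fun i => by
    refine rd_eq_self (mem_Fp_iff.2 ⟨hg i, le_trans ?_ hb⟩)
    gcongr
    exact Finset.single_le_sum (fun j _ => abs_nonneg (u j * v j)) (Finset.mem_univ i)
  simp only [rDot, hmul]
  exact rSum_eq_sum hg hb

theorem rDot_eq_dotProduct_of_int {u v : Fin N → ℝ} {M : ℝ}
    (h : ∀ i, u i * v i ∈ (⊥ : Subring ℝ) ∧ |u i * v i| ≤ M) (hM : N * M ≤ 2 ^ s - 1) :
    rDot s u v = u ⬝ᵥ v := by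
  refine rDot_eq_dotProduct (fun i => mul_mem (h i).1 (pow_mem (natCast_mem _ 2) s)) ?_
  have hsum : ∑ i, |u i * v i| ≤ N * M := by
    simpa using Finset.sum_le_card_nsmul Finset.univ _ M fun i _ => (h i).2
  calc (∑ i, |u i * v i|) * 2 ^ s ≤ (2 ^ s - 1) * 2 ^ s := by gcongr; linarith
    _ ≤ 2 ^ (2 * s) - 1 := by
      rw [two_mul, pow_add]; nlinarith [one_le_pow₀ (M₀ := ℝ) (n := s) one_le_two]

theorem rDot_zero_left (x : Fin N → ℝ) : rDot s 0 x = 0 := by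
  rw [rDot_eq_dotProduct_of_int (M := 0) (fun _ => by simp [zero_mem])
    (by simpa using one_le_pow₀ (M₀ := ℝ) one_le_two), zero_dotProduct]

theorem rMulVec_diagonal {e v : Fin N → ℝ} (h : ∀ k, e k * v k ∈ Fp s) :
    rMulVec s (Matrix.diagonal e) v = fun k => e k * v k := by
  funext k
  have hrow : (fun l => rMul s (Matrix.diagonal e k l) (v l)) = Pi.single k (e k * v k) := by
    funext l
    by_cases hl : l = k
    · subst hl; simp [rMul, rd_eq_self (h l)]
    · simp [rMul, Matrix.diagonal_apply_ne _ (Ne.symm hl), hl, rd_zero]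
  exact (congrArg (rSum s) hrow).trans (rSum_pi_single k (h k))

end ExactSums

section HardAttention

variable {s : ℕ}

theorem rExp_eq_zero {z : ℝ} (hz : z ≤ -(s + 1)) : rExp s z = 0 := by
  refine rd_eq_zero (Real.exp_pos z).le ?_
  have h2 : (2 : ℝ) ^ (s + 1) ≤ Real.exp (s + 1) := by
    calc (2 : ℝ) ^ (s + 1) ≤ Real.exp 1 ^ (s + 1) := by
          gcongr; linarith [Real.add_one_le_exp 1]
      _ = Real.exp (s + 1) := by rw [← Real.exp_nat_mul]; push_cast; ring_nf
  calc Real.exp z * 2 ^ s ≤ Real.exp (-(s + 1)) * 2 ^ s := by gcongr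
    _ = 2 ^ s / Real.exp (s + 1) := by rw [Real.exp_neg]; ring
    _ ≤ 2 ^ s / 2 ^ (s + 1) := by gcongr
    _ = 1 / 2 := by rw [pow_succ]; field_simp

theorem rSoftmax_eq_pi_single {N : ℕ} (hs : 1 ≤ s) {z : Fin N → ℝ} {j₀ : Fin N}
    (h₀ : z j₀ = 0) (h : ∀ j ≠ j₀, z j ≤ -(s + 1)) : rSoftmax s z = Pi.single j₀ 1 := by
  have hexp : ∀ j, rExp s (z j) = (Pi.single j₀ 1 : Fin N → ℝ) j := fun j => by
    by_cases hj : j = j₀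
    · subst hj; simp [rExp, h₀, rd_eq_self (one_mem_Fp hs)]
    · simp [hj, rExp_eq_zero (h j hj)]
  funext j
  simp only [rSoftmax, hexp]
  rw [rSum_pi_single j₀ (one_mem_Fp hs), rDiv, div_one]
  by_cases hj : j = j₀
  · subst hj; simp [rd_eq_self (one_mem_Fp hs)]
  · simp [hj, rd_zero]

def attnScore (s : ℕ) {d dA n : ℕ} (p : AttnParams d dA) (x : Fin n → Fin d → ℝ)
    (i j : Fin n) : ℝ :=
  rDot s (rMulVec s p.WQ (x i)) (rMulVec s p.WK (x j))

theorem attnHead_eq_of_hardmax {d dA n : ℕ} (hs : 1 ≤ s) (p : AttnParams d dA)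
    (x : Fin n → Fin d → ℝ) {i j₀ : Fin n} (hj₀ : j₀ ≤ i) (h₀ : attnScore s p x i j₀ = 0)
    (h : ∀ j ≤ i, j ≠ j₀ → attnScore s p x i j ≤ -(s + 1)) :
    attnHead s p x i = fun k => rDot s (fun l => p.WO l k) (rMulVec s p.WV (x j₀)) := by
  let j₀' : Fin (i + 1) := ⟨j₀, Nat.lt_succ_of_le hj₀⟩
  have hw := rSoftmax_eq_pi_single (z := fun j : Fin (i + 1) =>
    attnScore s p x i ⟨j, lt_of_le_of_lt (Nat.lt_succ_iff.mp j.2) i.2⟩) (j₀ := j₀') hs h₀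
    fun j hj => h _ (Nat.lt_succ_iff.mp j.2) fun he => hj (by ext; simp [j₀', ← he])
  funext k
  simp only [attnHead]
  unfold attnScore at hw
  rw [hw]
  congr 1
  funext l
  have hterm : (fun j : Fin (i + 1) => rMul s ((Pi.single j₀' 1 : Fin (i + 1) → ℝ) j)
      (rMulVec s p.WV (x ⟨j, lt_of_le_of_lt (Nat.lt_succ_iff.mp j.2) i.2⟩) l)) =
      Pi.single j₀' (rMulVec s p.WV (x j₀) l) := by
    funext j
    by_cases hj : j = j₀'
    · subst hj
      simp only [Pi.single_eq_same, one_mul, rMul]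
      exact rd_eq_self (rSum_mem_Fp _)
    · simp [hj, rMul, rd_zero]
  exact hterm ▸ rSum_pi_single _ (rSum_mem_Fp _)

end HardAttention

section SignedBinary

variable {s : ℕ}

theorem sbin_mem_bot (I : ℕ) (t : Fin s) : sbin s I t ∈ (⊥ : Subring ℝ) := by
  unfold sbin; split_ifs
  · exact one_mem _
  · exact neg_mem (one_mem _)

theorem abs_sbin (I : ℕ) (t : Fin s) : |sbin s I t| = 1 := by
  unfold sbin; split_ifs <;> simp

theorem sbin_dotProduct_self (I : ℕ) : sbin s I ⬝ᵥ sbin s I = s := by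
  have h : ∀ t, sbin s I t * sbin s I t = 1 := fun t => by unfold sbin; split_ifs <;> norm_num
  simp [dotProduct, h]

theorem sbin_dotProduct_le_of_ne {I J : ℕ} (hI : I < 2 ^ s) (hJ : J < 2 ^ s) (hIJ : I ≠ J) :
    sbin s I ⬝ᵥ sbin s J ≤ s - 2 := by
  obtain ⟨t, ht, hbit⟩ : ∃ t < s, I.testBit t ≠ J.testBit t := by
    by_contra! hc
    refine hIJ (Nat.eq_of_testBit_eq fun t => ?_)
    by_cases h : t < s
    · exact hc t h
    · have hst : 2 ^ s ≤ 2 ^ t := Nat.pow_le_pow_right two_pos (not_lt.1 h)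
      rw [Nat.testBit_lt_two_pow (hI.trans_le hst), Nat.testBit_lt_two_pow (hJ.trans_le hst)]
  have hterm : ∀ u, 0 ≤ 1 - sbin s I u * sbin s J u := fun u => by
    unfold sbin; split_ifs <;> norm_num
  have hdiff : 1 - sbin s I ⟨t, ht⟩ * sbin s J ⟨t, ht⟩ = 2 := by
    unfold sbin
    cases hIt : I.testBit t <;> cases hJt : J.testBit t <;> simp_all <;> norm_num
  have h2 : 2 ≤ ∑ u, (1 - sbin s I u * sbin s J u) :=
    hdiff ▸ Finset.single_le_sum (fun u _ => hterm u) (Finset.mem_univ _)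
  rw [Finset.sum_sub_distrib] at h2
  simp only [Finset.sum_const, Finset.card_univ, Fintype.card_fin, nsmul_eq_mul, mul_one] at h2
  simp only [dotProduct]
  linarith

theorem twoPow_dotProduct_sbin : ∀ {s I : ℕ}, I < 2 ^ s →
    (fun t : Fin s => (2 : ℝ) ^ (t : ℕ)) ⬝ᵥ sbin s I = 2 * I + 1 - 2 ^ s
  | 0, I, hI => by
    obtain rfl : I = 0 := by simpa using hI
    simp [dotProduct]
  | s + 1, I, hI => by
    have ih := twoPow_dotProduct_sbin (s := s) (I := I / 2) (by rw [pow_succ] at hI; omega)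
    have hsucc : ∀ t : Fin s, sbin (s + 1) I t.succ = sbin s (I / 2) t := fun t => by
      simp [sbin, Nat.testBit_add_one]
    have hI2 : (I : ℝ) = 2 * (I / 2 : ℕ) + (I % 2 : ℕ) := by
      exact_mod_cast (Nat.div_add_mod I 2).symm
    simp only [dotProduct, Fin.sum_univ_succ, hsucc, Fin.val_succ, pow_succ] at ih ⊢
    rw [Finset.sum_congr rfl fun t _ => mul_right_comm _ _ _, ← Finset.sum_mul, ih, hI2]
    rcases Nat.mod_two_eq_zero_or_one I with h | h <;>
      simp [sbin, Nat.testBit_zero, h] <;> ring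

def binWeight (s : ℕ) (σ : ℤ) : Fin s → ℝ :=
  fun t => σ * 2 ^ (t : ℕ) + if (t : ℕ) = 0 then 1 else 0

theorem binWeight_mem_bot (σ : ℤ) (t : Fin s) : binWeight s σ t ∈ (⊥ : Subring ℝ) := by
  unfold binWeight
  refine add_mem (mul_mem (intCast_mem _ σ) (pow_mem (natCast_mem _ 2) _)) ?_
  split_ifs
  · exact one_mem _
  · exact zero_mem _

theorem abs_binWeight_le {σ : ℤ} (hσ : |σ| ≤ 1) (t : Fin s) : |binWeight s σ t| ≤ 2 ^ s := by
  have hσ' : |(σ : ℝ)| ≤ 1 := by exact_mod_cast hσ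
  have ht : (2 : ℝ) ^ ((t : ℕ) + 1) ≤ 2 ^ s := pow_le_pow_right₀ one_le_two t.2
  have he : |(if (t : ℕ) = 0 then 1 else 0 : ℝ)| ≤ 1 := by split_ifs <;> simp
  calc |binWeight s σ t| ≤ |(σ : ℝ)| * 2 ^ (t : ℕ) + 1 := by
        refine (abs_add_le _ _).trans ?_
        rw [abs_mul, abs_of_pos (by positivity : (0 : ℝ) < 2 ^ (t : ℕ))]
        linarith
    _ ≤ 2 ^ s := by
        rw [pow_succ] at ht
        nlinarith [one_le_pow₀ (M₀ := ℝ) (n := (t : ℕ)) one_le_two]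

theorem binWeight_dotProduct_sbin (hs : 0 < s) (σ : ℤ) {I : ℕ} (hI : I < 2 ^ s) :
    binWeight s σ ⬝ᵥ sbin s I = σ * (2 * I + 1 - 2 ^ s) + sbin s I ⟨0, hs⟩ := by
  have hlow :
      ∑ t : Fin s, (if (t : ℕ) = 0 then 1 else 0) * sbin s I t = sbin s I ⟨0, hs⟩ := by
    rw [Finset.sum_eq_single ⟨0, hs⟩ (fun t _ ht => by simp [Fin.ext_iff.not.1 ht]) (by simp)]
    simp
  simp only [dotProduct, binWeight, add_mul, Finset.sum_add_distrib, mul_assoc,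
    ← Finset.mul_sum]
  rw [hlow, ← twoPow_dotProduct_sbin hI]
  rfl

theorem binWeight_dotProduct_sbin_fShift (hs : 0 < s) {I : ℕ} (h1 : 1 ≤ I) (hI : I < 2 ^ s) :
    binWeight s 1 ⬝ᵥ sbin s I + binWeight s (-1) ⬝ᵥ sbin s (fShift I) = 2 := by
  have hf : fShift I < 2 ^ s := by unfold fShift; split_ifs <;> omega
  rw [binWeight_dotProduct_sbin hs _ hI, binWeight_dotProduct_sbin hs _ hf]
  unfold fShift
  split_ifs with h
  · subst h; simp [sbin]; ring
  · have hpar : sbin s I ⟨0, hs⟩ + sbin s (I - 1) ⟨0, hs⟩ = 0 := by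
      simp only [sbin, Nat.testBit_zero]
      rcases Nat.mod_two_eq_zero_or_one I with hm | hm
      · simp [hm, show (I - 1) % 2 = 1 by omega]
      · simp [hm, show (I - 1) % 2 = 0 by omega]
    push_cast [Nat.cast_sub h1]
    linarith

end SignedBinary

section BlockArithmetic

variable {s' d s : ℕ}

theorem rMulVec_blockVec {m : ℕ} (R₁ : Fin d → Fin m → ℝ) (R₂ R₃ : Fin s → Fin m → ℝ)
    (x : Fin m → ℝ) :
    rMulVec s' (blockVec R₁ R₂ R₃ : Matrix _ _ ℝ) x =
      blockVec (fun r => rDot s' (R₁ r) x) (fun t => rDot s' (R₂ t) x)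
        (fun t => rDot s' (R₃ t) x) :=
  comp_blockVec (fun row => rDot s' row x) R₁ R₂ R₃

theorem rDot_blockVec_zero_left {M : ℝ} (hM0 : 0 ≤ M) (hM : (d + 2 * s) * M ≤ 2 ^ s' - 1)
    (u : Fin d → ℝ) {v w a b : Fin s → ℝ}
    (hv : ∀ t, v t * a t ∈ (⊥ : Subring ℝ) ∧ |v t * a t| ≤ M)
    (hw : ∀ t, w t * b t ∈ (⊥ : Subring ℝ) ∧ |w t * b t| ≤ M) :
    rDot s' (blockVec 0 v w) (blockVec u a b) = v ⬝ᵥ a + w ⬝ᵥ b := by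
  rw [rDot_eq_dotProduct_of_int (M := M) ?_ (by push_cast; exact hM), dotProduct_blockVec,
    zero_dotProduct, zero_add]
  intro k
  rw [show blockVec 0 v w k * blockVec u a b k = _ from
    congrFun (blockVec_map₂ (· * ·) 0 v w u a b) k]
  exact forall_blockVec (P := fun y => y ∈ (⊥ : Subring ℝ) ∧ |y| ≤ M).2
    ⟨fun _ => by simp [zero_mem, hM0], hv, hw⟩ k

end BlockArithmetic

section ShiftHead

variable (d s c : ℕ)

def shiftQuery : Matrix (Fin (d + 2 * s)) (Fin (d + 2 * s)) ℝ :=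
  blockVec 0 (fun t => blockVec 0 0 (Pi.single t (4 * c : ℝ)))
    (fun _ => blockVec 0 ((c : ℝ) • binWeight s 1) ((c : ℝ) • binWeight s (-1)))

def shiftKey : Matrix (Fin (d + 2 * s)) (Fin (d + 2 * s)) ℝ :=
  blockVec 0 (fun t => blockVec 0 (Pi.single t 1) 0)
    (fun _ => blockVec 0 (-binWeight s 1) (-binWeight s (-1)))

def dataProj : Matrix (Fin (d + 2 * s)) (Fin (d + 2 * s)) ℝ := Matrix.diagonal (blockVec 1 0 0)

def shiftHead : AttnParams (d + 2 * s) (d + 2 * s) :=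
  ⟨shiftQuery d s c, shiftKey d s, dataProj d s, (dataProj d s).transpose⟩

variable {d s c} {s' : ℕ}

theorem rMulVec_shiftQuery (hs : 0 < s)
    (hM : ((d + 2 * s) * (4 * c * 2 ^ s) : ℝ) ≤ 2 ^ s' - 1) {I : ℕ} (h1 : 1 ≤ I) (hI : I < 2 ^ s)
    (u : Fin d → ℝ) :
    rMulVec s' (shiftQuery d s c) (blockVec u (sbin s I) (sbin s (fShift I))) =
      blockVec 0 (fun t => 4 * c * sbin s (fShift I) t) (fun _ => 2 * c) := by
  have hM0 : (0 : ℝ) ≤ 4 * c * 2 ^ s := by positivity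
  have hc0 : (0 : ℝ) ≤ c := Nat.cast_nonneg c
  have h2s : (1 : ℝ) ≤ 2 ^ s := one_le_pow₀ one_le_two
  have hzero : ∀ a : Fin s → ℝ, ∀ t, (0 : Fin s → ℝ) t * a t ∈ (⊥ : Subring ℝ) ∧
      |(0 : Fin s → ℝ) t * a t| ≤ 4 * c * 2 ^ s := fun _ _ => by simp [zero_mem, hM0]
  rw [shiftQuery, rMulVec_blockVec]
  congr 1
  · funext _; exact rDot_zero_left _
  · funext t
    rw [rDot_blockVec_zero_left hM0 hM u (hzero _) fun t' => ?_, zero_dotProduct, zero_add,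
      single_dotProduct]
    by_cases ht : t' = t
    · subst ht
      simp only [Pi.single_eq_same, abs_mul, abs_sbin, mul_one, Nat.abs_cast, Nat.abs_ofNat]
      exact ⟨mul_mem (mul_mem (natCast_mem _ 4) (natCast_mem _ c)) (sbin_mem_bot _ _),
        by nlinarith⟩
    · simp [ht, zero_mem, hM0]
  · have hweight : ∀ {σ : ℤ}, |σ| ≤ 1 → ∀ J t, ((c : ℝ) • binWeight s σ) t * sbin s J t ∈
        (⊥ : Subring ℝ) ∧ |((c : ℝ) • binWeight s σ) t * sbin s J t| ≤ 4 * c * 2 ^ s := by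
      intro σ hσ J t
      simp only [Pi.smul_apply, smul_eq_mul, mul_assoc, abs_mul, abs_sbin, mul_one,
        Nat.abs_cast]
      refine ⟨mul_mem (natCast_mem _ c)
        (mul_mem (binWeight_mem_bot _ _) (sbin_mem_bot _ _)), ?_⟩
      nlinarith [abs_binWeight_le hσ t]
    funext _
    rw [rDot_blockVec_zero_left hM0 hM u (hweight (by norm_num) I) (hweight (by norm_num) _),
      smul_dotProduct, smul_dotProduct, ← smul_add, binWeight_dotProduct_sbin_fShift hs h1 hI,
      smul_eq_mul, mul_comm]

theorem rMulVec_shiftKey (hs : 0 < s) (hc : 1 ≤ c)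
    (hM : ((d + 2 * s) * (4 * c * 2 ^ s) : ℝ) ≤ 2 ^ s' - 1) {J : ℕ} (h1 : 1 ≤ J) (hJ : J < 2 ^ s)
    (u : Fin d → ℝ) :
    rMulVec s' (shiftKey d s) (blockVec u (sbin s J) (sbin s (fShift J))) =
      blockVec 0 (sbin s J) (fun _ => -2) := by
  have hM0 : (0 : ℝ) ≤ 4 * c * 2 ^ s := by positivity
  have hc' : (1 : ℝ) ≤ c := by exact_mod_cast hc
  have h2s : (1 : ℝ) ≤ 2 ^ s := one_le_pow₀ one_le_two
  rw [shiftKey, rMulVec_blockVec]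
  congr 1
  · funext _; exact rDot_zero_left _
  · funext t
    rw [rDot_blockVec_zero_left hM0 hM u (fun t' => ?_) (fun _ => by simp [zero_mem, hM0]),
      single_dotProduct, zero_dotProduct, add_zero, one_mul]
    by_cases ht : t' = t
    · subst ht
      simp only [Pi.single_eq_same, one_mul, abs_sbin]
      exact ⟨sbin_mem_bot _ _, by nlinarith⟩
    · simp [ht, zero_mem, hM0]
  · have hweight : ∀ {σ : ℤ}, |σ| ≤ 1 → ∀ J t, (-binWeight s σ) t * sbin s J t ∈
        (⊥ : Subring ℝ) ∧ |(-binWeight s σ) t * sbin s J t| ≤ 4 * c * 2 ^ s := by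
      intro σ hσ J t
      simp only [Pi.neg_apply, abs_mul, abs_neg, abs_sbin, mul_one]
      refine ⟨mul_mem (neg_mem (binWeight_mem_bot _ _)) (sbin_mem_bot _ _), ?_⟩
      nlinarith [abs_binWeight_le hσ t]
    funext _
    rw [rDot_blockVec_zero_left hM0 hM u (hweight (by norm_num) J) (hweight (by norm_num) _),
      neg_dotProduct, neg_dotProduct, ← neg_add, binWeight_dotProduct_sbin_fShift hs h1 hJ]

theorem attnScore_shiftHead (hs : 0 < s) (hc : 1 ≤ c)
    (hM : ((d + 2 * s) * (4 * c * 2 ^ s) : ℝ) ≤ 2 ^ s' - 1) {n : ℕ} (hn : n < 2 ^ s)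
    (x : Fin n → Fin d → ℝ) (i j : Fin n) :
    attnScore s' (shiftHead d s c) (augment s x) i j =
      4 * c * (sbin s (fShift (i + 1)) ⬝ᵥ sbin s (j + 1) - s) := by
  have hM0 : (0 : ℝ) ≤ 4 * c * 2 ^ s := by positivity
  have h2s : (1 : ℝ) ≤ 2 ^ s := one_le_pow₀ one_le_two
  have h4c : (0 : ℝ) ≤ 4 * c := by positivity
  rw [attnScore, augment_eq_blockVec, augment_eq_blockVec]
  simp only [shiftHead]
  rw [rMulVec_shiftQuery hs hM (by omega) (by omega),
    rMulVec_shiftKey hs hc hM (by omega) (by omega),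
    rDot_blockVec_zero_left hM0 hM 0 (fun t => ?_) (fun t => ?_)]
  · simp only [dotProduct, mul_assoc, ← Finset.mul_sum, Finset.sum_const, Finset.card_univ,
      Fintype.card_fin, nsmul_eq_mul]
    ring
  · simp only [abs_mul, abs_sbin, mul_one, abs_of_nonneg h4c]
    refine ⟨mul_mem (mul_mem (mul_mem (natCast_mem _ 4) (natCast_mem _ c)) (sbin_mem_bot _ _))
      (sbin_mem_bot _ _), by nlinarith⟩
  · refine ⟨mul_mem (mul_mem (natCast_mem _ 2) (natCast_mem _ c))
      (neg_mem (natCast_mem _ 2)), ?_⟩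
    rw [abs_mul, abs_neg, abs_two, abs_of_nonneg (by positivity : (0 : ℝ) ≤ 2 * c)]
    nlinarith

theorem rMulVec_dataProj {u : Fin d → ℝ} (hu : ∀ r, u r ∈ Fp s') (v w : Fin s → ℝ) :
    rMulVec s' (dataProj d s) (blockVec u v w) = blockVec u 0 0 := by
  have hprod : (fun k => blockVec 1 0 0 k * blockVec u v w k) = blockVec u 0 0 := by
    rw [blockVec_map₂]; congr 1 <;> funext _ <;> simp
  rw [dataProj, rMulVec_diagonal, hprod]
  intro k
  rw [congrFun hprod k]
  exact forall_blockVec.2 ⟨hu, fun _ => zero_mem_Fp, fun _ => zero_mem_Fp⟩ k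

end ShiftHead

section ShiftHeadCorrect

variable {d s c s' : ℕ}

theorem shiftQuery_mem_Fp (hK : (4 * c * 2 ^ s : ℝ) ≤ 2 ^ s' - 1) :
    ∀ r k, shiftQuery d s c r k ∈ Fp s' := by
  have h2s : (1 : ℝ) ≤ 2 ^ s := one_le_pow₀ one_le_two
  have h4c : (4 * c : ℝ) ∈ Fp s' := by
    refine mem_Fp_of_int (mul_mem (natCast_mem _ 4) (natCast_mem _ c)) (le_trans ?_ hK)
    rw [abs_of_nonneg (by positivity)]
    nlinarith [(Nat.cast_nonneg c : (0 : ℝ) ≤ c)]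
  have hweight : ∀ {σ : ℤ}, |σ| ≤ 1 → ∀ t, ((c : ℝ) • binWeight s σ) t ∈ Fp s' :=
    fun hσ t => by
    refine mem_Fp_of_int (mul_mem (natCast_mem _ c) (binWeight_mem_bot _ _)) (le_trans ?_ hK)
    rw [Pi.smul_apply, smul_eq_mul, abs_mul, Nat.abs_cast]
    nlinarith [abs_binWeight_le hσ t, (Nat.cast_nonneg c : (0 : ℝ) ≤ c)]
  unfold shiftQuery
  exact forall_blockVec (P := fun row : Fin (d + 2 * s) → ℝ => ∀ k, row k ∈ Fp s').2
    ⟨fun _ _ => zero_mem_Fp,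
      fun t => forall_blockVec.2 ⟨fun _ => zero_mem_Fp, fun _ => zero_mem_Fp, single_mem_Fp t h4c⟩,
      fun _ => forall_blockVec.2
        ⟨fun _ => zero_mem_Fp, hweight (by norm_num), hweight (by norm_num)⟩⟩

theorem shiftKey_mem_Fp (hK : (2 ^ s : ℝ) ≤ 2 ^ s' - 1) : ∀ r k, shiftKey d s r k ∈ Fp s' := by
  have hweight : ∀ {σ : ℤ}, |σ| ≤ 1 → ∀ t, (-binWeight s σ) t ∈ Fp s' := fun hσ t =>
    mem_Fp_of_int (neg_mem (binWeight_mem_bot _ _))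
      (by rw [Pi.neg_apply, abs_neg]; exact (abs_binWeight_le hσ t).trans hK)
  have h1 : (1 : ℝ) ∈ Fp s' :=
    mem_Fp_of_int (one_mem _) (by rw [abs_one]; exact (one_le_pow₀ one_le_two).trans hK)
  unfold shiftKey
  exact forall_blockVec (P := fun row : Fin (d + 2 * s) → ℝ => ∀ k, row k ∈ Fp s').2
    ⟨fun _ _ => zero_mem_Fp,
      fun t => forall_blockVec.2 ⟨fun _ => zero_mem_Fp, single_mem_Fp t h1, fun _ => zero_mem_Fp⟩,
      fun _ => forall_blockVec.2
        ⟨fun _ => zero_mem_Fp, hweight (by norm_num), hweight (by norm_num)⟩⟩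

theorem dataProj_mem_Fp (hs' : 1 ≤ s') (r k : Fin (d + 2 * s)) : dataProj d s r k ∈ Fp s' := by
  rw [dataProj, Matrix.diagonal_apply]
  split_ifs
  · exact forall_blockVec.2 ⟨fun _ => one_mem_Fp hs', fun _ => zero_mem_Fp, fun _ => zero_mem_Fp⟩ r
  · exact zero_mem_Fp

theorem shiftHead_inFp (hs : 0 < s) (hs' : 1 ≤ s') (hc : 1 ≤ c)
    (hM : ((d + 2 * s) * (4 * c * 2 ^ s) : ℝ) ≤ 2 ^ s' - 1) : (shiftHead d s c).inFp s' := by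
  have hds : (1 : ℝ) ≤ d + 2 * s := by
    have : (1 : ℝ) ≤ s := by exact_mod_cast hs
    linarith [(Nat.cast_nonneg d : (0 : ℝ) ≤ d)]
  have hc' : (1 : ℝ) ≤ c := by exact_mod_cast hc
  have h2s : (0 : ℝ) ≤ 2 ^ s := by positivity
  have hK : (4 * c * 2 ^ s : ℝ) ≤ 2 ^ s' - 1 := by
    nlinarith [mul_nonneg (sub_nonneg.2 hds) (by positivity : (0 : ℝ) ≤ 4 * c * 2 ^ s)]
  exact ⟨shiftQuery_mem_Fp hK, shiftKey_mem_Fp (le_trans (by nlinarith) hK), dataProj_mem_Fp hs',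
    fun r k => dataProj_mem_Fp hs' k r⟩

-- The source position `f(i)` of the shift, with positions counted from `0`.
def fShiftFin {n : ℕ} (i : Fin n) : Fin n :=
  ⟨fShift (i + 1) - 1, by have := i.2; unfold fShift; split_ifs <;> omega⟩

theorem attnHead_shiftHead (hs : 0 < s) (hs' : 1 ≤ s') (hc : s' + 1 ≤ 8 * c)
    (hM : ((d + 2 * s) * (4 * c * 2 ^ s) : ℝ) ≤ 2 ^ s' - 1) {n : ℕ}
    (hn : n < 2 ^ s) {x : Fin n → Fin d → ℝ} (hx : ∀ i k, x i k ∈ Fp s') (i : Fin n) :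
    attnHead s' (shiftHead d s c) (augment s x) i = blockVec (x (fShiftFin i)) 0 0 := by
  have hc₁ : 1 ≤ c := by omega
  have hsrc : (fShiftFin i : ℕ) + 1 = fShift (i + 1) := by
    simp only [fShiftFin]; unfold fShift; split_ifs <;> omega
  have hfs : fShift (i + 1) < 2 ^ s := by unfold fShift; split_ifs <;> omega
  have hle : fShiftFin i ≤ i := by
    rw [Fin.le_iff_val_le_val]; simp only [fShiftFin]; unfold fShift; split_ifs <;> omega
  rw [attnHead_eq_of_hardmax hs' _ _ hle]
  · funext k
    change rMulVec s' (dataProj d s) (rMulVec s' (dataProj d s) (augment s x (fShiftFin i))) k = _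
    rw [augment_eq_blockVec, rMulVec_dataProj (hx _), rMulVec_dataProj (hx _)]
  · rw [attnScore_shiftHead hs hc₁ hM hn, hsrc, sbin_dotProduct_self, sub_self, mul_zero]
  · intro j _ hj
    rw [attnScore_shiftHead hs hc₁ hM hn]
    have hne : fShift (i + 1) ≠ j + 1 := fun h => hj (Fin.ext (by omega))
    have hlt := sbin_dotProduct_le_of_ne hfs (by omega) hne
    have hc' : (s' : ℝ) + 1 ≤ 8 * c := by exact_mod_cast hc
    nlinarith

end ShiftHeadCorrect

theorem exists_mul_le_two_pow_sub_one (K : ℕ) : ∃ N : ℕ, 1 ≤ N ∧ (K * N : ℝ) ≤ 2 ^ N - 1 := by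
  refine ⟨2 * K + 2, by omega, ?_⟩
  have hK : K < 2 ^ K := Nat.lt_two_pow_self
  have hlt : K * (2 * K + 2) < 2 ^ (2 * K + 2) := by
    rw [show 2 ^ (2 * K + 2) = 4 * (2 ^ K * 2 ^ K) by ring]
    nlinarith
  have : ((K * (2 * K + 2) + 1 : ℕ) : ℝ) ≤ ((2 ^ (2 * K + 2) : ℕ) : ℝ) := by exact_mod_cast hlt
  push_cast at this ⊢
  linarith

/-- **The shift map `SHIFT(x₁, x₂, …, x_n) = (x₁, x₁, x₂, …, x_{n−1})` is realized by a
single finite-precision causal self-attention head.** For `d, n ∈ ℕ+` and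
`s = ⌈log₂(n+1)⌉`, there are a precision `s'` and parameters of a single `s'`-precision
causal self-attention head on embedding dimension `d + 2s` such that on the augmented
sequence `x'_i = (x_i, sbin_s(i), sbin_s(f(i)))` (for any `x₁,…,x_n ∈ 𝔽_{s'}^d`) the head
outputs `(x_{f(i)}, 0^{2s})` at every position `i`. -/
theorem shift_by_attention_head :
    ∀ (d n : ℕ+),
      ∃ (s' dA : ℕ)
        (p : AttnParams ((d : ℕ) + 2 * Nat.clog 2 ((n : ℕ) + 1)) dA),
        p.inFp s' ∧
        ∀ x : Fin (n : ℕ) → Fin (d : ℕ) → ℝ,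
          (∀ i k, x i k ∈ Fp s') →
          ∀ (i : Fin (n : ℕ)) (k : Fin ((d : ℕ) + 2 * Nat.clog 2 ((n : ℕ) + 1))),
            attnHead s' p (augment (Nat.clog 2 ((n : ℕ) + 1)) x) i k
              = if h : (k : ℕ) < (d : ℕ) then
                  x ⟨fShift ((i : ℕ) + 1) - 1, by
                      have hi := i.2; unfold fShift; split <;> omega⟩
                    ⟨(k : ℕ), h⟩
                else 0 := by
  intro d n
  set s := Nat.clog 2 ((n : ℕ) + 1)
  have hs : 0 < s := Nat.clog_pos one_lt_two (by have := n.pos; omega)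
  have hn : (n : ℕ) < 2 ^ s := Nat.le_pow_clog one_lt_two _
  obtain ⟨s', hs', hK⟩ := exists_mul_le_two_pow_sub_one (((d : ℕ) + 2 * s) * (4 * 2 ^ s))
  have hM : (((d : ℕ) + 2 * s) * (4 * s' * 2 ^ s) : ℝ) ≤ 2 ^ s' - 1 := by
    push_cast at hK; linarith
  refine ⟨s', _, shiftHead d s s', shiftHead_inFp hs hs' (by omega) hM, fun x hx i k => ?_⟩
  rw [attnHead_shiftHead hs hs' (by omega) hM hn hx i, blockVec_zero_zero_apply]
  rfl

end LoopedTF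

end
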